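/- Let R > 0, let k_c : [0,R]×[0,R] → ℝ be continuous and symmetric (k_c(x,y) = k_c(y,x)), and let u : [0,R] → ℝ be continuous. Define C^R(u)(x) = ∫_0^x ∫_{x−y}^{R−y} y · k_c(y,z) u(y) u(z) dz dy and the truncated coagulation operator Q^R_c(u)(x) = (1/2)∫_0^x k_c(y, x−y) u(y) u(x−y) dy − u(x) ∫_0^{R−x} k_c(x,y) u(y) dy. Then C^R(u) is differentiable on (0,R) and for every x ∈ (0,R), (d/dx) C^R(u)(x) = −x · Q^R_c(u)(x). -/

import Mathlib

open MeasureTheory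

/-- The truncated conservative coagulation flux
`C^R(u)(x) = ∫_0^x ∫_{x−y}^{R−y} y · k_c(y,z) u(y) u(z) dz dy`. -/
noncomputable def coagFluxR (R : ℝ) (kc : ℝ → ℝ → ℝ) (u : ℝ → ℝ) (x : ℝ) : ℝ :=
  ∫ y in (0:ℝ)..x, ∫ z in (x - y)..(R - y), y * kc y z * u y * u z

/-- The truncated coagulation operator
`Q^R_c(u)(x) = (1/2)∫_0^x k_c(y,x−y) u(y) u(x−y) dy − u(x) ∫_0^{R−x} k_c(x,y) u(y) dy`. -/
noncomputable def QcR (R : ℝ) (kc : ℝ → ℝ → ℝ) (u : ℝ → ℝ) (x : ℝ) : ℝ :=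
  (1 / 2) * (∫ y in (0:ℝ)..x, kc y (x - y) * u y * u (x - y))
    - u x * ∫ y in (0:ℝ)..(R - x), kc x y * u y

/-! After the substitution `s = y + z`, the flux is `C(x) = ∫_0^x ∫_x^R h(y, s) ds dy` with
`h(y, s) = y k_c(y, s - y) u(y) u(s - y)`, the value on the diagonal of
`P(a, b) = ∫_0^a ∫_b^R h`. Both partial derivatives of `P`, namely `∫_b^R h(a, ·)` and
(after Fubini) `-∫_0^a h(·, b)`, are continuous, so
`C'(x) = ∫_x^R h(x, s) ds - ∫_0^x h(y, x) dy`. The first term is `x u(x) ∫_0^{R-x} k_c(x, ·) u`;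
in the second, the reflection `y ↦ x - y` and the symmetry of `k_c` replace the weight `y` by its
mean `x / 2`.

Continuity is only assumed on `[0, R]`: composing `k_c` and `u` with the projection onto `[0, R]`
makes them continuous on `ℝ` without changing `C` near `x` or `Q(x)`. -/

open Filter Topology Function Set

theorem hasDerivAt_comp_diag_of_partials {E : Type*} [NormedAddCommGroup E] [NormedSpace ℝ E]
    {f f₁ f₂ : ℝ → ℝ → E} {x : ℝ}
    (hf₁ : ∀ᶠ v in 𝓝 (x, x), HasDerivAt (f · v.2) (f₁ v.1 v.2) v.1)
    (hf₂ : ∀ᶠ v in 𝓝 (x, x), HasDerivAt (f v.1 ·) (f₂ v.1 v.2) v.2)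
    (hc₁ : ContinuousAt (uncurry f₁) (x, x)) (hc₂ : ContinuousAt (uncurry f₂) (x, x)) :
    HasDerivAt (fun t => f t t) (f₁ x x + f₂ x x) x := by
  have hlin (c : E) := (ContinuousLinearMap.smulRightL ℝ ℝ E 1).continuous.continuousAt (x := c)
  have hstrict := hasStrictFDerivAt_uncurry_coprod (𝕜 := ℝ) (u := (x, x)) (f := f)
    (f₁ := fun a b => (1 : ℝ →L[ℝ] ℝ).smulRight (f₁ a b))
    (f₂ := fun a b => (1 : ℝ →L[ℝ] ℝ).smulRight (f₂ a b))
    (hf₁.mono fun v hv => hv.hasFDerivAt) (hf₂.mono fun v hv => hv.hasFDerivAt)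
    ((hlin _).comp hc₁) ((hlin _).comp hc₂)
  have := hstrict.hasFDerivAt.comp (f := fun t : ℝ => (t, t)) x
    ((hasFDerivAt_id x).prodMk (hasFDerivAt_id x))
  simpa [HasUncurry.uncurry, comp_def] using this.hasDerivAt

theorem hasDerivAt_integral_integral_diag {E : Type*} [NormedAddCommGroup E] [NormedSpace ℝ E]
    [CompleteSpace E] {h : ℝ → ℝ → E} (hh : Continuous (uncurry h))
    (a R x : ℝ) :
    HasDerivAt (fun t => ∫ y in a..t, ∫ s in t..R, h y s)
      ((∫ s in x..R, h x s) - ∫ y in a..x, h y x) x := by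
  have hG : Continuous (uncurry fun y b => ∫ s in b..R, h y s) := by
    refine (intervalIntegral.continuous_parametric_intervalIntegral_of_continuous
      (f := fun p : ℝ × ℝ => h p.1) (a₀ := R) (μ := volume) (by fun_prop)
      continuous_snd).neg.congr fun p => ?_
    simp [uncurry, intervalIntegral.integral_symm p.2 R]
  have hK : Continuous (uncurry fun c s => ∫ y in a..c, h y s) :=
    intervalIntegral.continuous_parametric_intervalIntegral_of_continuous
      (f := fun p : ℝ × ℝ => (h · p.2)) (by fun_prop) continuous_fst
  have hswap (c b : ℝ) :
      ∫ y in a..c, ∫ s in b..R, h y s = ∫ s in b..R, ∫ y in a..c, h y s :=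
    intervalIntegral_intervalIntegral_swap <|
      (hh.continuousOn.integrableOn_compact (isCompact_uIcc.prod isCompact_uIcc)).mono_set
        (prod_mono uIoc_subset_uIcc uIoc_subset_uIcc)
  rw [sub_eq_add_neg]
  refine hasDerivAt_comp_diag_of_partials (f := fun c b => ∫ y in a..c, ∫ s in b..R, h y s)
    (f₁ := fun y b => ∫ s in b..R, h y s) (f₂ := fun c b => -∫ y in a..c, h y b)
    (.of_forall fun v => ?_) (.of_forall fun v => ?_) hG.continuousAt hK.neg.continuousAt
  · exact ((hG.comp (continuous_id.prodMk continuous_const)).integral_hasStrictDerivAt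
      a v.1).hasDerivAt
  · simp only [hswap]
    have hK' : Continuous fun s => ∫ y in a..v.1, h y s :=
      hK.comp (continuous_const.prodMk continuous_id)
    exact intervalIntegral.integral_hasDerivAt_left (hK'.intervalIntegrable _ _)
      (hK'.stronglyMeasurableAtFilter _ _) hK'.continuousAt

theorem integral_id_mul_eq_midpoint_mul_integral {g : ℝ → ℝ} {a b : ℝ}
    (hg : IntervalIntegrable g volume a b) (hsymm : ∀ y, g (a + b - y) = g y) :
    ∫ y in a..b, y * g y = (a + b) / 2 * ∫ y in a..b, g y := by
  have hreflect : ∫ y in a..b, y * g y = ∫ y in a..b, (a + b - y) * g y := by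
    simpa [hsymm] using
      (intervalIntegral.integral_comp_sub_left (fun y => y * g y) (a + b) (a := a) (b := b)).symm
  have hsum : (∫ y in a..b, y * g y) + ∫ y in a..b, (a + b - y) * g y
      = (a + b) * ∫ y in a..b, g y := by
    rw [← intervalIntegral.integral_add (hg.continuousOn_mul (g := fun y => y) (by fun_prop))
      (hg.continuousOn_mul (g := (a + b - ·)) (by fun_prop)),
      ← intervalIntegral.integral_const_mul]
    congr 1 with y
    ring
  linarith

theorem coagFluxR_eqOn {R : ℝ} {kc kc' : ℝ → ℝ → ℝ} {u u' : ℝ → ℝ}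
    (hkc : EqOn (uncurry kc) (uncurry kc') (Icc 0 R ×ˢ Icc 0 R)) (hu : EqOn u u' (Icc 0 R)) :
    EqOn (coagFluxR R kc u) (coagFluxR R kc' u') (Icc 0 R) := by
  intro x hx
  refine intervalIntegral.integral_congr fun y hy => intervalIntegral.integral_congr fun z hz => ?_
  rw [uIcc_of_le hx.1] at hy
  rw [uIcc_of_le (by linarith [hx.2])] at hz
  have hy' : y ∈ Icc 0 R := ⟨hy.1, hy.2.trans hx.2⟩
  have hz' : z ∈ Icc 0 R := ⟨by linarith [hz.1, hy.2], by linarith [hz.2, hy.1]⟩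
  simp only [hu hy', hu hz', show kc y z = kc' y z from hkc (mk_mem_prod hy' hz')]

theorem QcR_eq_of_eqOn {R x : ℝ} {kc kc' : ℝ → ℝ → ℝ} {u u' : ℝ → ℝ}
    (hkc : EqOn (uncurry kc) (uncurry kc') (Icc 0 R ×ˢ Icc 0 R)) (hu : EqOn u u' (Icc 0 R))
    (hx : x ∈ Icc 0 R) : QcR R kc u x = QcR R kc' u' x := by
  have hgain : ∫ y in 0..x, kc y (x - y) * u y * u (x - y)
      = ∫ y in 0..x, kc' y (x - y) * u' y * u' (x - y) := by
    refine intervalIntegral.integral_congr fun y hy => ?_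
    rw [uIcc_of_le hx.1] at hy
    have hy' : y ∈ Icc 0 R := ⟨hy.1, hy.2.trans hx.2⟩
    have hxy : x - y ∈ Icc 0 R := ⟨by linarith [hy.2], by linarith [hy.1, hx.2]⟩
    simp only [hu hy', hu hxy, show kc y (x - y) = kc' y (x - y) from hkc (mk_mem_prod hy' hxy)]
  have hloss : ∫ y in 0..R - x, kc x y * u y = ∫ y in 0..R - x, kc' x y * u' y := by
    refine intervalIntegral.integral_congr fun y hy => ?_
    rw [uIcc_of_le (by linarith [hx.2])] at hy
    have hy' : y ∈ Icc 0 R := ⟨hy.1, by linarith [hy.2, hx.1]⟩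
    simp only [hu hy', show kc x y = kc' x y from hkc (mk_mem_prod hx hy')]
  rw [QcR, QcR, hgain, hloss, hu hx]

theorem hasDerivAt_coagFluxR_of_continuous {R : ℝ} {kc : ℝ → ℝ → ℝ} {u : ℝ → ℝ}
    (hkc : Continuous (uncurry kc)) (hsymm : ∀ a b, kc a b = kc b a) (hu : Continuous u)
    (x : ℝ) : HasDerivAt (coagFluxR R kc u) (-(x * QcR R kc u x)) x := by
  set h : ℝ → ℝ → ℝ := fun y s => y * kc y (s - y) * u y * u (s - y)
  have hh : Continuous (uncurry h) := by
    simp only [h]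
    fun_prop
  have hflux : coagFluxR R kc u = fun t => ∫ y in 0..t, ∫ s in t..R, h y s := by
    funext t
    refine intervalIntegral.integral_congr fun y _ => ?_
    exact (intervalIntegral.integral_comp_sub_right (fun z => y * kc y z * u y * u z) y).symm
  have hloss : ∫ s in x..R, h x s = x * u x * ∫ z in 0..R - x, kc x z * u z := by
    rw [intervalIntegral.integral_comp_sub_right (fun z => x * kc x z * u x * u z), sub_self,
      ← intervalIntegral.integral_const_mul]
    congr 1 with z
    ring
  have hgain : ∫ y in 0..x, h y x = x / 2 * ∫ y in 0..x, kc y (x - y) * u y * u (x - y) := by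
    have hmid := integral_id_mul_eq_midpoint_mul_integral
      (g := fun y => kc y (x - y) * u y * u (x - y)) (a := 0) (b := x)
      ((by fun_prop : Continuous fun y => kc y (x - y) * u y * u (x - y)).intervalIntegrable _ _)
      fun y => by simp only [zero_add, sub_sub_cancel, hsymm y]; ring
    rw [zero_add] at hmid
    rw [← hmid]
    congr 1 with y
    ring
  have hvalue : -(x * QcR R kc u x) = (∫ s in x..R, h x s) - ∫ y in 0..x, h y x := by
    rw [hgain, hloss, QcR]
    ring
  rw [hflux, hvalue]
  exact hasDerivAt_integral_integral_diag hh 0 R x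

theorem truncated_coagulation_conservative_form_general
    (R : ℝ) (kc : ℝ → ℝ → ℝ) (u : ℝ → ℝ)
    (hkc_cont : ContinuousOn (fun p : ℝ × ℝ => kc p.1 p.2) (Set.Icc 0 R ×ˢ Set.Icc 0 R))
    (hkc_symm : ∀ x ∈ Set.Icc (0:ℝ) R, ∀ y ∈ Set.Icc (0:ℝ) R, kc x y = kc y x)
    (hu_cont : ContinuousOn u (Set.Icc 0 R)) :
    ∀ x ∈ Set.Ioo (0:ℝ) R, HasDerivAt (coagFluxR R kc u) (-(x * QcR R kc u x)) x := by
  intro x hx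
  have hR : (0:ℝ) ≤ R := hx.1.le.trans hx.2.le
  set π : ℝ → ℝ := fun t => projIcc 0 R hR t
  have hπ : Continuous π := continuous_subtype_val.comp continuous_projIcc
  have hπ_mem (t : ℝ) : π t ∈ Icc 0 R := (projIcc 0 R hR t).2
  have hπ_eq : EqOn π id (Icc 0 R) := fun t ht => congrArg Subtype.val (projIcc_of_mem hR ht)
  have hkc : EqOn (uncurry kc) (uncurry fun a b => kc (π a) (π b)) (Icc 0 R ×ˢ Icc 0 R) :=
    fun p hp => by simp [uncurry, hπ_eq hp.1, hπ_eq hp.2]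
  have hu : EqOn u (u ∘ π) (Icc 0 R) := fun t ht => by simp [hπ_eq ht]
  have hderiv := hasDerivAt_coagFluxR_of_continuous (R := R) (kc := fun a b => kc (π a) (π b))
    (hkc_cont.comp_continuous (f := fun p : ℝ × ℝ => (π p.1, π p.2)) (by fun_prop)
      fun p => mk_mem_prod (hπ_mem p.1) (hπ_mem p.2))
    (fun a b => hkc_symm _ (hπ_mem a) _ (hπ_mem b)) (hu_cont.comp_continuous hπ hπ_mem) x
  rw [QcR_eq_of_eqOn hkc hu (Ioo_subset_Icc_self hx)]
  exact hderiv.congr_of_eventuallyEq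
    ((coagFluxR_eqOn hkc hu).eventuallyEq_of_mem (Icc_mem_nhds hx.1 hx.2))

/-- the truncated coagulation operator admits the conservative form
`x·Q^R_c(u) = −∂_x C^R(u)` on `(0,R)`. -/
theorem truncated_coagulation_conservative_form
    (R : ℝ) (hR : 0 < R) (kc : ℝ → ℝ → ℝ) (u : ℝ → ℝ)
    (hkc_cont : ContinuousOn (fun p : ℝ × ℝ => kc p.1 p.2) (Set.Icc 0 R ×ˢ Set.Icc 0 R))
    (hkc_symm : ∀ x ∈ Set.Icc (0:ℝ) R, ∀ y ∈ Set.Icc (0:ℝ) R, kc x y = kc y x)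
    (hu_cont : ContinuousOn u (Set.Icc 0 R)) :
    ∀ x ∈ Set.Ioo (0:ℝ) R, HasDerivAt (coagFluxR R kc u) (-(x * QcR R kc u x)) x :=
  truncated_coagulation_conservative_form_general R kc u hkc_cont hkc_symm hu_cont
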